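/- arXiv:1401.0112 — 3 statements merged into one kernel-verified Lean document; each statement's English description precedes it below -/
import Mathlib

section
/- Fix m = 4k, n = 2k, an integer v ≥ 1, and r ∈ R^v_m. Then the number of orbits of the multiplicative action of U_m = {f : gcd(f, m) = 1} on the quotient group ZDiv(r^{v−1} + r^{v−2} + ⋯ + r + 1)/⟨r − 1⟩ equals the number of positive divisors of the integer gcd(r − 1, n)·gcd(r^{v−1} + r^{v−2} + ⋯ + r + 1, n)/n. -/
/-!
Let `n = 2k`, `S = ∑_{i<v} rⁱ`, `e = gcd(S, n)`, `d = gcd(r - 1, n)` and `q = n / e`.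
Then `ZDiv(S) = ⟨q⟩`, and `n ∣ S (r - 1) = rᵛ - 1` gives `q ∣ d`,
so `⟨r - 1⟩ = ⟨d⟩ ≤ ⟨q⟩`. Since the units of `ℤ/m` surject onto those of `ℤ/d`,
two residues lie in one `U_m`-orbit modulo `d` exactly when they have the same gcd with `d`.
On `⟨q⟩` this gcd is `q` times a divisor of `d / q = d e / n`, and every such divisor occurs.
-/

namespace QDPaper

/-- The "twisting" coefficient: `b * a = a^(n-1) * b` where `n = 2k`, so conjugation by `b`
multiplies the exponent of `a` by `2k - 1` (mod `4k`). -/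
def twist (k : ℕ) : Bool → ZMod (4*k)
  | false => 1
  | true => 2 * (k : ZMod (4*k)) - 1

lemma twist_sq (k : ℕ) : twist k true * twist k true = 1 := by
  have h : ((4*k : ℕ) : ZMod (4*k)) = 0 := ZMod.natCast_self _
  push_cast at h
  show (2 * (k : ZMod (4*k)) - 1) * (2 * (k : ZMod (4*k)) - 1) = 1
  linear_combination ((k : ZMod (4*k)) - 1) * h

lemma twist_mul (k : ℕ) (b1 b2 : Bool) :
    twist k b1 * twist k b2 = twist k (Bool.xor b1 b2) := by
  cases b1 <;> cases b2
  · simp [twist]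
  · simp [twist]
  · simp [twist]
  · exact (twist_sq k).trans rfl

/-- The quasi-dihedral (semidihedral) group
`QD_{2m} = ⟨a, b | a^m = b^2 = 1, b a = a^(n-1) b⟩` with `m = 4k`, `n = 2k`,
realized concretely on pairs `(j, t)` standing for the normal form `a^j * b^t`. -/
def QuasiDihedral (k : ℕ) : Type := ZMod (4*k) × Bool

namespace QuasiDihedral

variable {k : ℕ}

instance : Group (QuasiDihedral k) where
  mul x y := (x.1 + twist k x.2 * y.1, Bool.xor x.2 y.2)
  one := ((0 : ZMod (4*k)), false)
  inv x := (-(twist k x.2) * x.1, x.2)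
  mul_assoc x y z := by
    show ((x.1 + twist k x.2 * y.1) + twist k (Bool.xor x.2 y.2) * z.1,
        Bool.xor (Bool.xor x.2 y.2) z.2)
      = (x.1 + twist k x.2 * (y.1 + twist k y.2 * z.1), Bool.xor x.2 (Bool.xor y.2 z.2))
    rw [Prod.mk.injEq]
    exact ⟨by rw [← twist_mul]; ring, Bool.xor_assoc _ _ _⟩
  one_mul x := by
    obtain ⟨j, t⟩ := x
    show ((0 : ZMod (4*k)) + twist k false * j, Bool.xor false t) = (j, t)
    simp [twist]
  mul_one x := by
    obtain ⟨j, t⟩ := x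
    show (j + twist k t * 0, Bool.xor t false) = (j, t)
    simp
  inv_mul_cancel x := by
    show ((-(twist k x.2) * x.1) + twist k x.2 * x.1, Bool.xor x.2 x.2)
      = ((0 : ZMod (4*k)), false)
    rw [Prod.mk.injEq]
    exact ⟨by ring, Bool.xor_self _⟩

end QuasiDihedral

/-- The generator `a` of the cyclic subgroup of order `m = 4k`. -/
def a (k : ℕ) : QuasiDihedral k := ((1 : ZMod (4*k)), false)

/-- The generator `b`, an element of order `2`. -/
def b (k : ℕ) : QuasiDihedral k := ((0 : ZMod (4*k)), true)

end QDPaper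

theorem Nat.card_quot_eq_of_surjective {α β : Type*} {r : α → α → Prop} {φ : α → β}
    (hφ : Function.Surjective φ) (hr : ∀ x y, r x y ↔ φ x = φ y) :
    Nat.card (Quot r) = Nat.card β :=
  Nat.card_congr <| Equiv.ofBijective (Quot.lift φ fun x y h => (hr x y).mp h)
    ⟨fun a b => Quot.induction_on₂ a b fun x y h => Quot.sound ((hr x y).mpr h),
      (Quot.surjective_lift _).mpr hφ⟩

theorem Int.natCast_dvd_mul_iff_div_gcd_dvd {N : ℕ} (hN : N ≠ 0) (s c : ℤ) :
    (N : ℤ) ∣ s * c ↔ ((N / Int.gcd s N : ℕ) : ℤ) ∣ c := by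
  constructor
  · intro h
    have hsc : s * c ≡ s * 0 [ZMOD N] := by rw [mul_zero]; exact Int.modEq_zero_iff_dvd.mpr h
    rw [Int.natCast_div, Int.gcd_comm]
    exact Int.modEq_zero_iff_dvd.mp (Int.ModEq.cancel_left_div_gcd (by positivity) hsc)
  · rintro ⟨c', rfl⟩
    obtain ⟨s', hs'⟩ := Int.gcd_dvd_left s N
    have hN : (Int.gcd s N : ℤ) * ((N / Int.gcd s N : ℕ) : ℤ) = N := by
      exact_mod_cast Nat.mul_div_cancel' (Int.natCast_dvd_natCast.mp (Int.gcd_dvd_right _ _))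
    exact ⟨s' * c', by
      linear_combination ((N / Int.gcd s N : ℕ) : ℤ) * c' * hs' + s' * c' * hN⟩

theorem ZMod.intCast_mem_zmultiples_intCast_iff {N : ℕ} (t c : ℤ) :
    (c : ZMod N) ∈ AddSubgroup.zmultiples (t : ZMod N) ↔ (Int.gcd t N : ℤ) ∣ c := by
  rw [AddSubgroup.mem_zmultiples_iff, Int.coe_gcd, gcd_dvd_iff_exists]
  constructor
  · rintro ⟨m, hm⟩
    obtain ⟨j, hj⟩ := (ZMod.intCast_eq_intCast_iff_dvd_sub (m * t) c N).mp
      (by push_cast [← hm, zsmul_eq_mul]; rfl)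
    exact ⟨m, j, by linarith⟩
  · rintro ⟨m, j, rfl⟩
    exact ⟨m, by push_cast [zsmul_eq_mul, ZMod.natCast_self]; ring⟩

theorem ZMod.intCast_mul_eq_zero_iff {N : ℕ} [NeZero N] (s : ℤ) (z : ZMod N) :
    (s : ZMod N) * z = 0 ↔ N / Int.gcd s N ∣ z.val := by
  have hcast : (s : ZMod N) * z = ((s * z.val : ℤ) : ZMod N) := by
    push_cast; rw [ZMod.natCast_zmod_val]
  rw [hcast, ZMod.intCast_zmod_eq_zero_iff_dvd, Int.natCast_dvd_mul_iff_div_gcd_dvd (NeZero.ne N),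
    Int.natCast_dvd_natCast]

theorem Int.gcd_eq_gcd_of_dvd_mul_sub {d : ℕ} {f x y : ℤ} (hf : Int.gcd f d = 1)
    (h : (d : ℤ) ∣ f * x - y) : Int.gcd x d = Int.gcd y d := by
  obtain ⟨j, hj⟩ := h
  calc Int.gcd x d = Int.gcd (f * x) d := by
        simp only [Int.gcd, Int.natAbs_mul]; exact (Nat.Coprime.gcd_mul_left_cancel _ hf).symm
    _ = Int.gcd (f * x - j * d) d := by
        rw [Int.gcd_comm, Int.gcd_comm (f * x - _), Int.gcd_sub_mul_right_right]
    _ = Int.gcd y d := by rw [show f * x - j * d = y by linarith]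

theorem ZMod.exists_coprime_mul_modEq_of_isCoprime {M d : ℕ} [NeZero M] (hdM : d ∣ M)
    {x y : ℤ} (hx : IsCoprime x d) (hy : IsCoprime y d) :
    ∃ f : ℤ, Int.gcd f M = 1 ∧ f * x ≡ y [ZMOD d] := by
  obtain ⟨u, hu⟩ := ZMod.unitsMap_surjective hdM
    (ZMod.unitOfIsCoprime y hy * (ZMod.unitOfIsCoprime x hx)⁻¹)
  refine ⟨(u : ZMod M).val, ?_, ?_⟩
  · rw [Int.gcd_natCast_natCast]
    exact ZMod.val_coe_unit_coprime u
  have hx_inv : ((ZMod.unitOfIsCoprime x hx)⁻¹ : (ZMod d)ˣ) * (x : ZMod d) = 1 :=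
    Units.inv_mul _
  rw [← ZMod.intCast_eq_intCast_iff, Int.cast_mul, Int.cast_natCast, ZMod.natCast_val,
    ← ZMod.unitsMap_val hdM, hu, Units.val_mul, mul_assoc, hx_inv, mul_one]
  rfl

theorem Int.exists_coprime_mul_modEq_of_gcd_eq {M d : ℕ} [NeZero M] (hdM : d ∣ M) {x y : ℤ}
    (h : Int.gcd x d = Int.gcd y d) :
    ∃ f : ℤ, Int.gcd f M = 1 ∧ f * x ≡ y [ZMOD d] := by
  have hd : d ≠ 0 := by rintro rfl; exact NeZero.ne M (Nat.eq_zero_of_zero_dvd hdM)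
  set w := Int.gcd x d
  have hw : w ≠ 0 := (Int.gcd_pos_of_ne_zero_right _ (by exact_mod_cast hd)).ne'
  obtain ⟨d', hd'⟩ : w ∣ d := Int.natCast_dvd_natCast.mp (Int.gcd_dvd_right _ _)
  have coprime_of_gcd_eq : ∀ {z z' : ℤ}, z = w * z' → Int.gcd z d = w → IsCoprime z' d' := by
    intro z z' hz hg
    rw [hz, hd', Nat.cast_mul, Int.gcd_mul_left, Int.natAbs_natCast] at hg
    exact Int.isCoprime_iff_gcd_eq_one.mpr ((mul_eq_left₀ hw).mp hg)
  obtain ⟨x', hx'⟩ : (w : ℤ) ∣ x := Int.gcd_dvd_left _ _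
  obtain ⟨y', hy'⟩ : (w : ℤ) ∣ y := h ▸ Int.gcd_dvd_left _ _
  obtain ⟨f, hf, hfx⟩ := ZMod.exists_coprime_mul_modEq_of_isCoprime
    ((Dvd.intro_left w hd'.symm).trans hdM)
    (coprime_of_gcd_eq hx' rfl) (coprime_of_gcd_eq hy' h.symm)
  refine ⟨f, hf, ?_⟩
  rw [hx', hy', hd', Nat.cast_mul, mul_left_comm]
  exact hfx.mul_left'

theorem Int.exists_coprime_mul_sub_dvd_iff {M d : ℕ} [NeZero M] (hdM : d ∣ M) (x y : ℤ) :
    (∃ f : ℤ, Int.gcd f M = 1 ∧ (d : ℤ) ∣ f * x - y) ↔ Int.gcd x d = Int.gcd y d := by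
  constructor
  · rintro ⟨f, hf, hdvd⟩
    exact Int.gcd_eq_gcd_of_dvd_mul_sub (Nat.Coprime.coprime_dvd_right hdM hf) hdvd
  · intro h
    obtain ⟨f, hf, hfxy⟩ := Int.exists_coprime_mul_modEq_of_gcd_eq hdM h
    exact ⟨f, hf, hfxy.symm.dvd⟩

theorem ZMod.exists_coprime_mul_sub_mem_zmultiples_iff {N M : ℕ} [NeZero M] (hNM : N ∣ M)
    (t : ℤ) (x y : ZMod N) :
    (∃ f : ℤ, Int.gcd f M = 1 ∧ (f : ZMod N) * x - y ∈ AddSubgroup.zmultiples (t : ZMod N)) ↔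
      Nat.gcd x.val (Int.gcd t N) = Nat.gcd y.val (Int.gcd t N) := by
  have : NeZero N := ⟨by rintro rfl; exact NeZero.ne M (Nat.eq_zero_of_zero_dvd hNM)⟩
  have hcast (f : ℤ) : (f : ZMod N) * x - y = ((f * x.val - y.val : ℤ) : ZMod N) := by
    push_cast; rw [ZMod.natCast_zmod_val, ZMod.natCast_zmod_val]
  simp_rw [hcast, ZMod.intCast_mem_zmultiples_intCast_iff]
  rw [Int.exists_coprime_mul_sub_dvd_iff
      ((Int.natCast_dvd_natCast.mp (Int.gcd_dvd_right _ _)).trans hNM),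
    Int.gcd_natCast_natCast, Int.gcd_natCast_natCast]

theorem ZMod.card_quot_coprime_mul_sub_mem_zmultiples {N M : ℕ} [NeZero M] (hNM : N ∣ M)
    {s t : ℤ} (hst : (N : ℤ) ∣ s * t) :
    Nat.card (Quot (fun (x y : {z : ZMod N // (s : ZMod N) * z = 0}) =>
      ∃ f : ℤ, Int.gcd f M = 1 ∧
        ((f : ZMod N) * x.1 - y.1) ∈ AddSubgroup.zmultiples (t : ZMod N)))
      = (Nat.divisors (Int.gcd t N * Int.gcd s N / N)).card := by
  have : NeZero N := ⟨by rintro rfl; exact NeZero.ne M (Nat.eq_zero_of_zero_dvd hNM)⟩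
  set d := Int.gcd t N
  set e := Int.gcd s N
  set q := N / e
  have hdN : d ∣ N := Int.natCast_dvd_natCast.mp (Int.gcd_dvd_right _ _)
  have heN : e ∣ N := Int.natCast_dvd_natCast.mp (Int.gcd_dvd_right _ _)
  have he : 0 < e := Nat.pos_of_dvd_of_pos heN (NeZero.pos N)
  have hq : 0 < q := Nat.div_pos (Nat.le_of_dvd (NeZero.pos N) heN) he
  have hqd : q ∣ d :=
    Int.dvd_gcd ((Int.natCast_dvd_mul_iff_div_gcd_dvd (NeZero.ne N) s t).mp hst)
      (Int.natCast_dvd_natCast.mpr (Nat.div_dvd_of_dvd heN))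
  have hval (x : {z : ZMod N // (s : ZMod N) * z = 0}) : q ∣ x.1.val :=
    (ZMod.intCast_mul_eq_zero_iff s x.1).mp x.2
  have hdq : d / q ≠ 0 := (Nat.div_pos (Nat.le_of_dvd
    (Int.gcd_pos_of_ne_zero_right _ (by exact_mod_cast NeZero.ne N)) hqd) hq).ne'
  have hde : d * e / N = d / q := by
    rw [← Nat.mul_div_cancel' heN, mul_comm e q, Nat.mul_div_mul_right _ _ he]
  rw [hde, ← Nat.card_eq_finsetCard]
  refine Nat.card_quot_eq_of_surjective (φ := fun x => ⟨Nat.gcd x.1.val d / q,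
    Nat.mem_divisors.mpr ⟨Nat.div_dvd_div (Nat.dvd_gcd (hval x) hqd) (Nat.gcd_dvd_right _ _),
      hdq⟩⟩) ?_ ?_
  · rintro ⟨w, hw⟩
    have hwd : w ∣ d / q := Nat.dvd_of_mem_divisors hw
    refine ⟨⟨((q * w : ℕ) : ZMod N), ?_⟩, Subtype.ext ?_⟩
    · rw [ZMod.intCast_mul_eq_zero_iff, ZMod.val_natCast]
      exact (Nat.dvd_mod_iff (Nat.div_dvd_of_dvd heN)).mpr (dvd_mul_right q w)
    · show Nat.gcd ((q * w : ℕ) : ZMod N).val d / q = w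
      rw [ZMod.val_natCast, ((Nat.mod_modEq _ N).of_dvd hdN).gcd_eq, ← Nat.mul_div_cancel' hqd,
        Nat.gcd_mul_left, Nat.gcd_eq_left hwd, Nat.mul_div_cancel_left _ hq]
  · intro x y
    rw [ZMod.exists_coprime_mul_sub_mem_zmultiples_iff hNM, Subtype.mk.injEq,
      Nat.div_left_inj (Nat.dvd_gcd (hval x) hqd) (Nat.dvd_gcd (hval y) hqd)]

namespace QDPaper

theorem statement7_general (k : ℕ) (hk : 1 ≤ k) (v : ℕ) (r : ℤ)
    (hrv : r^v ≡ 1 [ZMOD (2*k)]) :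
    Nat.card (Quot (fun (x y :
        {z : ZMod (2*k) // ((∑ i ∈ Finset.range v, r^i : ℤ) : ZMod (2*k)) * z = 0}) =>
      ∃ f : ℤ, Int.gcd f (4*k) = 1 ∧
        ((f : ZMod (2*k)) * x.1 - y.1)
          ∈ AddSubgroup.zmultiples ((r - 1 : ℤ) : ZMod (2*k))))
      = (Nat.divisors
          ((Int.gcd (r - 1) (2*k) * Int.gcd (∑ i ∈ Finset.range v, r^i) (2*k)) / (2*k))).card := by
  have : NeZero (4 * k) := ⟨by omega⟩
  have hdvd : ((2 * k : ℕ) : ℤ) ∣ (∑ i ∈ Finset.range v, r ^ i) * (r - 1) := by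
    rw [geom_sum_mul, Nat.cast_mul, Nat.cast_ofNat]
    exact hrv.symm.dvd
  simpa only [Nat.cast_mul, Nat.cast_ofNat] using
    ZMod.card_quot_coprime_mul_sub_mem_zmultiples (Dvd.intro_left 2 (by ring) : 2 * k ∣ 4 * k)
      hdvd

/-- Fix `m = 4k`, `n = 2k`, `v ≥ 1`, `r ∈ R^v_m`. The number of orbits of the
multiplicative action of `U_m = {f : gcd(f,m) = 1}` on the quotient group
`ZDiv(r^(v-1) + ⋯ + r + 1)/⟨r-1⟩` equals the number of positive divisors of
`gcd(r-1, n) * gcd(r^(v-1) + ⋯ + r + 1, n) / n`.  (The orbits are realized as classes of the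
relation `x ∼ y ↔ ∃ f, gcd(f,m) = 1 ∧ f•x - y ∈ ⟨r-1⟩` on `ZDiv(r^(v-1) + ⋯ + r + 1)`.) -/
theorem statement7 (k : ℕ) (hk : 1 ≤ k) (v : ℕ) (hv : 1 ≤ v) (r : ℤ)
    (hr : Int.gcd r (4*k) = 1) (hrv : r^v ≡ 1 [ZMOD (2*k)]) :
    Nat.card (Quot (fun (x y :
        {z : ZMod (2*k) // ((∑ i ∈ Finset.range v, r^i : ℤ) : ZMod (2*k)) * z = 0}) =>
      ∃ f : ℤ, Int.gcd f (4*k) = 1 ∧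
        ((f : ZMod (2*k)) * x.1 - y.1)
          ∈ AddSubgroup.zmultiples ((r - 1 : ℤ) : ZMod (2*k))))
      = (Nat.divisors
          ((Int.gcd (r - 1) (2*k) * Int.gcd (∑ i ∈ Finset.range v, r^i) (2*k)) / (2*k))).card :=
  statement7_general k hk v r hrv

end QDPaper
end

section
/- Let m = 4k, n = 2k, and r ∈ R²_m. Then the index of the cyclic subgroup ⟨r − 1⟩ in the subgroup ZDiv(r + 1) of Z_n satisfies |ZDiv(r + 1)/⟨r − 1⟩| ≤ 2; equivalently, gcd(r + 1, n)·gcd(r − 1, n) ≤ 2n. -/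
/-!
In `ZMod n`, `ZDiv c` is the kernel of multiplication by `c`, whose image is `⟨c⟩`; so for `c = r + 1`
it has index `n / gcd(r + 1, n)`, while `⟨r - 1⟩` has index `gcd(r - 1, n)`. As `n ∣ (r + 1)(r - 1)`,
`⟨r - 1⟩ ≤ ZDiv (r + 1)`, and multiplicativity of the index gives
`[ZDiv (r + 1) : ⟨r - 1⟩] · n = gcd(r + 1, n) · gcd(r - 1, n)`. The two gcds are divisors of `n`
whose own gcd divides `(r + 1) - (r - 1) = 2`, so their product is at most `2 · lcm ≤ 2n`.
-/

namespace QDPaper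

/-- `ZDiv(c) = {y ∈ Z_n : c·y = 0}` (with `n = 2k`), as an additive subgroup of `Z_n`. -/
def ZDiv (k : ℕ) (c : ZMod (2*k)) : AddSubgroup (ZMod (2*k)) where
  carrier := {y | c * y = 0}
  zero_mem' := by simp
  add_mem' := by
    intro x y hx hy
    simp only [Set.mem_setOf_eq] at hx hy ⊢
    rw [mul_add, hx, hy, add_zero]
  neg_mem' := by
    intro x hx
    simp only [Set.mem_setOf_eq] at hx ⊢
    rw [mul_neg, hx, neg_zero]

end QDPaper

theorem Nat.mul_le_gcd_mul_of_dvd {a b n : ℕ} (ha : a ∣ n) (hb : b ∣ n) (hn : 0 < n) :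
    a * b ≤ a.gcd b * n := by
  rw [← Nat.gcd_mul_lcm a b]
  exact Nat.mul_le_mul_left _ (Nat.le_of_dvd hn (Nat.lcm_dvd ha hb))

theorem Int.gcd_add_one_mul_gcd_sub_one_le (r : ℤ) {n : ℕ} (hn : 0 < n) :
    (r + 1).gcd n * (r - 1).gcd n ≤ 2 * n := by
  have hgcd : ((r + 1).gcd n).gcd ((r - 1).gcd n) ∣ 2 := by
    have h := dvd_sub ((Int.natCast_dvd_natCast.mpr (Nat.gcd_dvd_left _ _)).trans
        (Int.gcd_dvd_left (r + 1) n))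
      ((Int.natCast_dvd_natCast.mpr (Nat.gcd_dvd_right _ _)).trans (Int.gcd_dvd_left (r - 1) n))
    rw [add_sub_sub_cancel, one_add_one_eq_two] at h
    exact_mod_cast h
  calc (r + 1).gcd n * (r - 1).gcd n ≤ ((r + 1).gcd n).gcd ((r - 1).gcd n) * n :=
        Nat.mul_le_gcd_mul_of_dvd (Int.gcd_dvd_natAbs_right ..) (Int.gcd_dvd_natAbs_right ..) hn
    _ ≤ 2 * n := Nat.mul_le_mul_right _ (Nat.le_of_dvd two_pos hgcd)

namespace ZMod

theorem range_mulLeft {n : ℕ} (c : ZMod n) :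
    (AddMonoidHom.mulLeft c).range = AddSubgroup.zmultiples c := by
  ext x
  simp only [AddMonoidHom.mem_range, AddMonoidHom.coe_mulLeft, AddSubgroup.mem_zmultiples_iff,
    zsmul_eq_mul]
  constructor
  · rintro ⟨y, rfl⟩
    exact ⟨y.cast, by rw [ZMod.intCast_cast, ZMod.cast_id', id, mul_comm]⟩
  · rintro ⟨z, rfl⟩
    exact ⟨z, mul_comm _ _⟩

theorem zmultiples_le_ker_mulLeft_intCast {n : ℕ} {x y : ℤ} (h : (n : ℤ) ∣ x * y) :
    AddSubgroup.zmultiples (y : ZMod n) ≤ (AddMonoidHom.mulLeft (x : ZMod n)).ker := by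
  rw [AddSubgroup.zmultiples_le, AddMonoidHom.mem_ker, AddMonoidHom.coe_mulLeft, ← Int.cast_mul,
    ZMod.intCast_zmod_eq_zero_iff_dvd]
  exact h

variable {n : ℕ} [NeZero n]

theorem addOrderOf_intCast (x : ℤ) : addOrderOf (x : ZMod n) = n / x.gcd n := by
  rw [← ZMod.natCast_zmod_val (x : ZMod n), ZMod.addOrderOf_coe _ (NeZero.ne n), ← Int.gcd_emod,
    ← ZMod.val_intCast, Int.gcd_natCast_natCast, Nat.gcd_comm]

theorem index_zmultiples_intCast (x : ℤ) :
    (AddSubgroup.zmultiples (x : ZMod n)).index = x.gcd n := by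
  have h := (AddSubgroup.zmultiples (x : ZMod n)).card_mul_index
  rw [Nat.card_zmultiples, addOrderOf_intCast, Nat.card_zmod] at h
  have hg : x.gcd n ∣ n := Int.gcd_dvd_natAbs_right x n
  refine Nat.eq_of_mul_eq_mul_left (Nat.div_pos (Nat.le_of_dvd (NeZero.pos n) hg)
    (Nat.pos_of_dvd_of_pos hg (NeZero.pos n))) ?_
  rw [h, Nat.div_mul_cancel hg]

theorem index_ker_mulLeft_intCast (x : ℤ) :
    (AddMonoidHom.mulLeft (x : ZMod n)).ker.index = n / x.gcd n := by
  rw [AddSubgroup.index_ker, range_mulLeft, Nat.card_zmultiples, addOrderOf_intCast]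

theorem relIndex_zmultiples_ker_mulLeft_mul {x y : ℤ} (h : (n : ℤ) ∣ x * y) :
    (AddSubgroup.zmultiples (y : ZMod n)).relIndex (AddMonoidHom.mulLeft (x : ZMod n)).ker * n =
      x.gcd n * y.gcd n := by
  have hrel := AddSubgroup.relIndex_mul_index (zmultiples_le_ker_mulLeft_intCast h)
  rw [index_ker_mulLeft_intCast, index_zmultiples_intCast] at hrel
  have hg : x.gcd n ∣ n := Int.gcd_dvd_natAbs_right x n
  calc _ = (AddSubgroup.zmultiples (y : ZMod n)).relIndex (AddMonoidHom.mulLeft (x : ZMod n)).ker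
          * (n / x.gcd n) * x.gcd n := by rw [mul_assoc, Nat.div_mul_cancel hg]
    _ = x.gcd n * y.gcd n := by rw [hrel, mul_comm]

end ZMod

namespace QDPaper

theorem ZDiv_eq_ker_mulLeft (k : ℕ) (c : ZMod (2 * k)) :
    ZDiv k c = (AddMonoidHom.mulLeft c).ker := rfl

theorem statement15_general (k : ℕ) (hk : 1 ≤ k) (r : ℤ)
    (hr2 : r^2 ≡ 1 [ZMOD (2*k)]) :
    Nat.card (ZDiv k ((r + 1 : ℤ) : ZMod (2*k)) ⧸
        (AddSubgroup.zmultiples ((r - 1 : ℤ) : ZMod (2*k))).addSubgroupOf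
          (ZDiv k ((r + 1 : ℤ) : ZMod (2*k)))) ≤ 2
    ∧ Int.gcd (r + 1) (2*k) * Int.gcd (r - 1) (2*k) ≤ 2 * (2*k) := by
  have hn : 0 < 2 * k := by omega
  have : NeZero (2 * k) := ⟨hn.ne'⟩
  have hgcd := Int.gcd_add_one_mul_gcd_sub_one_le r hn
  refine ⟨?_, by exact_mod_cast hgcd⟩
  have hdvd : ((2 * k : ℕ) : ℤ) ∣ (r + 1) * (r - 1) := by
    have := hr2.symm.dvd
    push_cast
    rwa [← sq_sub_sq, one_pow]
  have hrel := ZMod.relIndex_zmultiples_ker_mulLeft_mul hdvd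
  rw [ZDiv_eq_ker_mulLeft]
  change AddSubgroup.relIndex _ _ ≤ 2
  exact Nat.le_of_mul_le_mul_right (hrel.trans_le hgcd) hn

/-- Let `m = 4k`, `n = 2k`, and `r ∈ R²_m` (so `gcd(r,m) = 1` and
`r² ≡ 1 (mod n)`). Then the index of `⟨r-1⟩` in `ZDiv(r+1) ≤ Z_n` satisfies
`|ZDiv(r+1)/⟨r-1⟩| ≤ 2`; equivalently, `gcd(r+1, n)·gcd(r-1, n) ≤ 2n`. -/
theorem statement15 (k : ℕ) (hk : 1 ≤ k) (r : ℤ)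
    (hr : Int.gcd r (4*k) = 1) (hr2 : r^2 ≡ 1 [ZMOD (2*k)]) :
    Nat.card (ZDiv k ((r + 1 : ℤ) : ZMod (2*k)) ⧸
        (AddSubgroup.zmultiples ((r - 1 : ℤ) : ZMod (2*k))).addSubgroupOf
          (ZDiv k ((r + 1 : ℤ) : ZMod (2*k)))) ≤ 2
    ∧ Int.gcd (r + 1) (2*k) * Int.gcd (r - 1) (2*k) ≤ 2 * (2*k) :=
  statement15_general k hk r hr2

end QDPaper
end

section
/- Let m = 4k, n = 2k, and r ∈ R²_m. Then |ZDiv(r + 1)/⟨r − 1⟩| = 2 (equivalently, gcd(r + 1, n)·gcd(r − 1, n) = 2n) if and only if m = 2^α·l with α ≥ 2 and l odd, and r ≡ ±1 (mod 2^{α−1}). -/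
/-! Multiplication by `c` on the cyclic group `ℤ/n` has kernel of order `gcd(n, c)` and `⟨d⟩` has
order `n / gcd(n, d)`, so Lagrange gives `|ZDiv(r+1)/⟨r-1⟩| · n = gcd(r+1, n) · gcd(r-1, n)`.
For odd `r` we have `gcd(r+1, r-1) = 2`, which turns this product into `gcd(r² - 1, 2n)`; hence
both conditions say `4k ∣ r² - 1`. The odd part `l` of `4k` already divides `2k ∣ r² - 1`, and
writing `r = 2a + 1`, `r² - 1 = 4a(a+1)` with one of `a, a + 1` odd, so `2^α ∣ r² - 1` exactly
when `2^(α-1)` divides `r - 1` or `r + 1`. -/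

namespace QDPaper

lemma gcd_intCast_eq_gcd_val (x : ℤ) (n : ℕ) [NeZero n] :
    Int.gcd x n = n.gcd (x : ZMod n).val := by
  rw [← Int.gcd_emod, ← ZMod.val_intCast, Int.gcd_natCast_natCast, Nat.gcd_comm]

lemma card_zmultiples_mul_gcd_val {n : ℕ} [NeZero n] (d : ZMod n) :
    Nat.card (AddSubgroup.zmultiples d) * n.gcd d.val = n := by
  rw [Nat.card_zmultiples, ← ZMod.natCast_zmod_val d, ZMod.addOrderOf_coe _ (NeZero.ne n),
    ZMod.val_natCast_of_lt (ZMod.val_lt d)]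
  exact Nat.div_mul_cancel (Nat.gcd_dvd_left n d.val)

section CyclicCounting

variable {k : ℕ} [NeZero k]

lemma ZDiv_eq_ker_nsmul (c : ZMod (2*k)) :
    ZDiv k c = (nsmulAddMonoidHom (α := ZMod (2*k)) c.val).ker := by
  ext y
  change c * y = 0 ↔ c.val • y = 0
  rw [nsmul_eq_mul, ZMod.natCast_zmod_val]

lemma card_ZDiv (c : ZMod (2*k)) : Nat.card (ZDiv k c) = (2*k).gcd c.val := by
  rw [ZDiv_eq_ker_nsmul, IsAddCyclic.card_nsmulAddMonoidHom_ker, Nat.card_zmod]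

lemma card_ZDiv_quotient_zmultiples_mul {c d : ZMod (2*k)} (hcd : c * d = 0) :
    Nat.card (ZDiv k c ⧸ (AddSubgroup.zmultiples d).addSubgroupOf (ZDiv k c)) * (2*k) =
      (2*k).gcd c.val * (2*k).gcd d.val := by
  have hle : AddSubgroup.zmultiples d ≤ ZDiv k c := AddSubgroup.zmultiples_le.mpr hcd
  have lagrange := AddSubgroup.relIndex_mul_relIndex ⊥ _ _ bot_le hle
  rw [AddSubgroup.relIndex_bot_left, AddSubgroup.relIndex_bot_left, card_ZDiv] at lagrange
  calc _ = (AddSubgroup.zmultiples d).relIndex (ZDiv k c) *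
        (Nat.card (AddSubgroup.zmultiples d) * (2*k).gcd d.val) := by
        rw [card_zmultiples_mul_gcd_val]; rfl
    _ = _ := by rw [← lagrange]; ring

lemma card_ZDiv_intCast_quotient_zmultiples_mul {x y : ℤ} (hxy : 2 * (k : ℤ) ∣ x * y) :
    Nat.card (ZDiv k (x : ZMod (2*k)) ⧸
        (AddSubgroup.zmultiples (y : ZMod (2*k))).addSubgroupOf (ZDiv k (x : ZMod (2*k)))) *
      (2*k) = Int.gcd x (2*k) * Int.gcd y (2*k) := by
  have hcast : (2 * k : ℤ) = ((2 * k : ℕ) : ℤ) := by push_cast; rfl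
  rw [hcast, gcd_intCast_eq_gcd_val, gcd_intCast_eq_gcd_val]
  refine card_ZDiv_quotient_zmultiples_mul ?_
  rwa [← Int.cast_mul, ZMod.intCast_zmod_eq_zero_iff_dvd, ← hcast]

end CyclicCounting

lemma Nat.gcd_mul_gcd_eq_gcd_mul_gcd (a b n : ℕ) :
    a.gcd n * b.gcd n = (a * b).gcd (n * n.gcd (a.gcd b)) := by
  rw [← Nat.gcd_mul_right, ← Nat.gcd_mul_left, ← Nat.gcd_mul_left, ← Nat.gcd_mul_left,
    ← Nat.gcd_mul_left]
  simp only [Nat.gcd_assoc]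
  congr 1
  rw [mul_comm a n, ← Nat.gcd_assoc, Nat.gcd_comm]

lemma gcd_add_one_sub_one_of_odd {r : ℤ} (hr : Odd r) : Int.gcd (r + 1) (r - 1) = 2 := by
  have h : r + 1 = 2 + (r - 1) := by ring
  rw [h, Int.gcd_add_self_left]
  have h2 : (2 : ℤ) ∣ r - 1 := by
    rwa [← even_iff_two_dvd, Int.even_sub_one, Int.not_even_iff_odd]
  exact_mod_cast Int.gcd_eq_left zero_le_two h2

lemma gcd_add_one_mul_gcd_sub_one {r : ℤ} (hr : Odd r) {n : ℤ} (hn : 2 ∣ n) :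
    Int.gcd (r + 1) n * Int.gcd (r - 1) n = Int.gcd (r ^ 2 - 1) (2 * n) := by
  have hsq : r ^ 2 - 1 = (r + 1) * (r - 1) := by ring
  have h2 := gcd_add_one_sub_one_of_odd hr
  rw [Int.gcd_eq_natAbs] at h2
  simp only [Int.gcd_eq_natAbs, hsq, Int.natAbs_mul]
  rw [Nat.gcd_mul_gcd_eq_gcd_mul_gcd, h2, Nat.gcd_eq_right (Int.ofNat_dvd_left.mp hn)]
  congr 1
  exact mul_comm _ _

lemma two_pow_dvd_mul_iff_of_odd {a b : ℤ} (h : Odd a ∨ Odd b) (n : ℕ) :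
    2 ^ n ∣ a * b ↔ 2 ^ n ∣ a ∨ 2 ^ n ∣ b := by
  refine ⟨fun hab => ?_, fun h' => h'.elim (Dvd.dvd.mul_right · b) (Dvd.dvd.mul_left · a)⟩
  rcases h with ha | hb
  · exact .inr ((Int.isCoprime_two_left.mpr ha).pow_left.dvd_of_dvd_mul_left hab)
  · exact .inl ((Int.isCoprime_two_left.mpr hb).pow_left.dvd_of_dvd_mul_right hab)

lemma two_pow_dvd_sq_sub_one_iff {r : ℤ} (hr : Odd r) (α : ℕ) :
    2 ^ (α + 2) ∣ r ^ 2 - 1 ↔ r ≡ 1 [ZMOD 2 ^ (α + 1)] ∨ r ≡ -1 [ZMOD 2 ^ (α + 1)] := by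
  obtain ⟨a, rfl⟩ := hr
  have hsq : (2 * a + 1) ^ 2 - 1 = 2 * (2 * (a * (a + 1))) := by ring
  have hsub : 1 - (2 * a + 1) = -(2 * a) := by ring
  have hadd : -1 - (2 * a + 1) = -(2 * (a + 1)) := by ring
  have hodd : Odd a ∨ Odd (a + 1) := (Int.even_or_odd a).symm.imp_right Even.add_one
  rw [Int.modEq_iff_dvd, Int.modEq_iff_dvd, hsq, hsub, hadd, dvd_neg, dvd_neg, pow_succ', pow_succ',
    mul_dvd_mul_iff_left two_ne_zero, mul_dvd_mul_iff_left two_ne_zero,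
    mul_dvd_mul_iff_left two_ne_zero, mul_dvd_mul_iff_left two_ne_zero,
    two_pow_dvd_mul_iff_of_odd hodd]

lemma gcd_natCast_eq_self_iff (a : ℤ) (m : ℕ) : Int.gcd a m = m ↔ (m : ℤ) ∣ a := by
  refine ⟨fun h => ?_, fun h => by exact_mod_cast Int.gcd_eq_right (Int.natCast_nonneg m) h⟩
  rw [← h]
  exact Int.gcd_dvd_left a m

lemma four_mul_dvd_sq_sub_one_iff {k : ℕ} (hk : k ≠ 0) {r : ℤ} (hr : Odd r)
    (h : 2 * (k : ℤ) ∣ r ^ 2 - 1) :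
    4 * (k : ℤ) ∣ r ^ 2 - 1 ↔ ∃ α l : ℕ, 4*k = 2^α * l ∧ Odd l ∧ 2 ≤ α ∧
      (r ≡ 1 [ZMOD (2^(α-1))] ∨ r ≡ -1 [ZMOD (2^(α-1))]) := by
  constructor
  · intro h4
    obtain ⟨t, u, hu, rfl⟩ := Nat.exists_eq_two_pow_mul_odd hk
    refine ⟨t + 2, u, by ring, hu, by omega, ?_⟩
    rw [show t + 2 - 1 = t + 1 from rfl, ← two_pow_dvd_sq_sub_one_iff hr]
    exact dvd_trans ⟨u, by push_cast; ring⟩ h4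
  · rintro ⟨α, l, hkl, hl, hα, hr'⟩
    obtain ⟨β, rfl⟩ := Nat.exists_eq_add_of_le' hα
    rw [show β + 2 - 1 = β + 1 from rfl, ← two_pow_dvd_sq_sub_one_iff hr] at hr'
    have hkl' : 4 * (k : ℤ) = 2 ^ (β + 2) * l := by exact_mod_cast hkl
    have hl' : (l : ℤ) ∣ r ^ 2 - 1 := by
      refine dvd_trans ⟨2 ^ (β + 1), mul_left_cancel₀ two_ne_zero ?_⟩ h
      linear_combination hkl'
    rw [hkl']
    exact (Int.isCoprime_two_left.mpr (by exact_mod_cast hl)).pow_left.mul_dvd hr' hl'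

/-- Let `m = 4k`, `n = 2k`, `r ∈ R²_m`. Then `|ZDiv(r+1)/⟨r-1⟩| = 2`
(equivalently `gcd(r+1,n)·gcd(r-1,n) = 2n`) if and only if `m = 2^α·l` with `α ≥ 2`, `l` odd,
and `r ≡ ±1 (mod 2^(α-1))`. -/
theorem statement16 (k : ℕ) (hk : 1 ≤ k) (r : ℤ)
    (hr : Int.gcd r (4*k) = 1) (hr2 : r^2 ≡ 1 [ZMOD (2*k)]) :
    (Nat.card (ZDiv k ((r + 1 : ℤ) : ZMod (2*k)) ⧸
        (AddSubgroup.zmultiples ((r - 1 : ℤ) : ZMod (2*k))).addSubgroupOf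
          (ZDiv k ((r + 1 : ℤ) : ZMod (2*k)))) = 2
      ↔ ∃ α l : ℕ, 4*k = 2^α * l ∧ Odd l ∧ 2 ≤ α ∧
          (r ≡ 1 [ZMOD (2^(α-1))] ∨ r ≡ -1 [ZMOD (2^(α-1))]))
    ∧ (Int.gcd (r + 1) (2*k) * Int.gcd (r - 1) (2*k) = 2 * (2*k)
      ↔ ∃ α l : ℕ, 4*k = 2^α * l ∧ Odd l ∧ 2 ≤ α ∧
          (r ≡ 1 [ZMOD (2^(α-1))] ∨ r ≡ -1 [ZMOD (2^(α-1))])) := by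
  have : NeZero k := ⟨by omega⟩
  have hodd : Odd r := by
    have hcop : IsCoprime r (2 * (2 * k)) := by
      rw [Int.isCoprime_iff_gcd_eq_one, ← hr]
      congr 1
      ring
    exact Int.isCoprime_two_right.mp hcop.of_mul_right_left
  have hdvd : 2 * (k : ℤ) ∣ r ^ 2 - 1 := hr2.symm.dvd
  have hgcd : Int.gcd (r + 1) (2*k) * Int.gcd (r - 1) (2*k) = 2 * (2*k) ↔
      4 * (k : ℤ) ∣ r ^ 2 - 1 := by
    rw [gcd_add_one_mul_gcd_sub_one hodd ⟨k, rfl⟩,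
      show 4 * (k : ℤ) = ((2 * (2 * k) : ℕ) : ℤ) by push_cast; ring]
    exact gcd_natCast_eq_self_iff _ _
  have hcard := card_ZDiv_intCast_quotient_zmultiples_mul (k := k) (x := r + 1) (y := r - 1)
    (by rwa [show (r + 1) * (r - 1) = r ^ 2 - 1 by ring])
  have hcond := hgcd.trans (four_mul_dvd_sq_sub_one_iff (by omega) hodd hdvd)
  refine ⟨?_, hcond⟩
  rw [← hcond, ← hcard]
  exact (Nat.mul_left_inj (by omega)).symm

end QDPaper
end
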